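/- Let k ≥ 2 and let ω = Σ_I a_I dx^{i₁}⊗⋯⊗dx^{i_k} be a smooth k-tensor on U. Then the Leibniz coboundary of ω satisfies dω = L(ω) + Σ_I a_I · Σ_{r=0}^{k−2} (−1)^r (dx^{i₁}⊗⋯⊗dx^{i_r}) ⊗ S(dx^{i_{r+1}}⊗⋯⊗dx^{i_k}), as an identity of (k+1)-fold multilinear operators evaluated on arbitrary smooth vector fields X₁,…,X_{k+1} on U. -/

import Mathlib

open scoped BigOperators

/-- A smooth `k`-tensor with coefficients `a_I` applied to `k` vector fields:
`ω(X₁ ⊗ ⋯ ⊗ X_k)(z) = Σ_I a_I(z) · X₁^{i₁}(z) ⋯ X_k^{i_k}(z)`. -/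
noncomputable def tensorApply {n : ℕ} (k : ℕ) (a : (Fin k → Fin n) → (Fin n → ℝ) → ℝ)
    (X : Fin k → (Fin n → ℝ) → (Fin n → ℝ)) : (Fin n → ℝ) → ℝ :=
  fun z => ∑ I : Fin k → Fin n, a I z * ∏ m : Fin k, X m z (I m)

/-- Lie bracket of vector fields on (an open subset of) ℝⁿ:
`[X,Y](z) = DY_z(X(z)) − DX_z(Y(z))`. -/
noncomputable def vfBracket {n : ℕ} (X Y : (Fin n → ℝ) → (Fin n → ℝ)) :
    (Fin n → ℝ) → (Fin n → ℝ) :=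
  fun z => fderiv ℝ Y z (X z) - fderiv ℝ X z (Y z)

/-- Leibniz coboundary of a `k`-tensor, evaluated on `k+1` vector fields. -/
noncomputable def leibnizD {n : ℕ} (k : ℕ) (a : (Fin k → Fin n) → (Fin n → ℝ) → ℝ)
    (X : Fin (k+1) → (Fin n → ℝ) → (Fin n → ℝ)) : (Fin n → ℝ) → ℝ :=
  fun z =>
    (∑ i : Fin (k+1), (-1 : ℝ)^(i : ℕ) *
      fderiv ℝ (tensorApply k a (fun m => X (i.succAbove m))) z (X i z))
    + ∑ i : Fin (k+1), ∑ j : Fin (k+1),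
        if h : i < j then
          (-1 : ℝ)^(j : ℕ) *
            tensorApply k a
              (Function.update (fun m => X (j.succAbove m))
                ⟨i.1, Nat.lt_of_lt_of_le (Fin.lt_def.mp h) (Nat.lt_succ_iff.mp j.isLt)⟩
                (vfBracket (X i) (X j))) z
        else 0


/-- The type of slot operators: maps sending a vector field to a function on `ℝⁿ`. -/
abbrev SlotOp (n : ℕ) := ((Fin n → ℝ) → (Fin n → ℝ)) → (Fin n → ℝ) → ℝ

/-- The slot operator `dx^p`, sending a vector field `X` to its component `X^p`. -/
noncomputable def dxop {n : ℕ} (p : Fin n) : SlotOp n :=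
  fun X z => X z p

/-- The slot operator `∂/∂xˡ ∘ dx^p`, sending a vector field `X` to `∂X^p/∂xˡ`. -/
noncomputable def ddxop {n : ℕ} (ℓ p : Fin n) : SlotOp n :=
  fun X z => fderiv ℝ (fun w => X w p) z (Pi.single ℓ 1)

/-- The operator `L(ω)` of a `k`-tensor `ω = Σ_I a_I dx^{i₁}⊗⋯⊗dx^{i_k}`:
`L(ω) = Σ_I Σ_ℓ (∂a_I/∂xˡ) Σ_{m=1}^{k+1} (−1)^{m+1}
  dx^{i₁}⊗⋯⊗dx^{i_{m−1}} ⊗ dxˡ ⊗ dx^{i_m}⊗⋯⊗dx^{i_k}`,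
evaluated on `k+1` vector fields. -/
noncomputable def Lop {n : ℕ} (k : ℕ) (a : (Fin k → Fin n) → (Fin n → ℝ) → ℝ)
    (X : Fin (k+1) → (Fin n → ℝ) → (Fin n → ℝ)) : (Fin n → ℝ) → ℝ :=
  fun z => ∑ I : Fin k → Fin n, ∑ ℓ : Fin n,
    fderiv ℝ (a I) z (Pi.single ℓ 1) *
      ∑ m : Fin (k+1), (-1 : ℝ)^(m : ℕ) *
        ∏ s : Fin (k+1), X s z ((Fin.insertNth m ℓ I : Fin (k+1) → Fin n) s)

/-- The operator `S(dx^{i₁}⊗⋯⊗dx^{i_k})` (here `k = j+2`), evaluated on `k+1` vector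
fields:
`S = Σ_{m=2}^{k} Σ_ℓ dxˡ ⊗ dx^{i₁}⊗⋯⊗dx^{i_{m−1}} ⊗ (∂/∂xˡ∘dx^{i_m}) ⊗ dx^{i_{m+1}}⊗⋯⊗dx^{i_k}`
`  + Σ_{m=2}^{k} (−1)^{m+2} Σ_ℓ dxˡ ⊗ dx^{i₂}⊗⋯⊗dx^{i_m} ⊗ (∂/∂xˡ∘dx^{i₁}) ⊗ dx^{i_{m+1}}⊗⋯⊗dx^{i_k}`,
where in the second sum the factor `(∂/∂xˡ ∘ dx^{i₁})` occupies the `(m+1)`-st slot. -/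
noncomputable def Sop {n : ℕ} (j : ℕ) (J : Fin (j+2) → Fin n)
    (X : Fin (j+3) → (Fin n → ℝ) → (Fin n → ℝ)) : (Fin n → ℝ) → ℝ :=
  fun z =>
    (∑ u : Fin (j+2), if (u : ℕ) = 0 then 0 else ∑ ℓ : Fin n,
      ∏ s : Fin (j+3),
        ((Fin.cons (dxop ℓ)
          (Function.update (fun r => dxop (J r)) u (ddxop ℓ (J u))) :
            Fin (j+3) → SlotOp n) s) (X s) z)
    + ∑ pos : Fin (j+2), if (pos : ℕ) = 0 then 0 else (-1 : ℝ)^((pos : ℕ)+1) *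
        ∑ ℓ : Fin n, ∏ s : Fin (j+3),
          ((Fin.cons (dxop ℓ)
            ((Fin.insertNth pos (ddxop ℓ (J 0)) (fun r => dxop (J r.succ))) :
              Fin (j+2) → SlotOp n) : Fin (j+3) → SlotOp n) s) (X s) z

open Finset

lemma clm_apply_eq_sum {n : ℕ} (L : (Fin n → ℝ) →L[ℝ] ℝ) (v : Fin n → ℝ) :
    L v = ∑ ℓ : Fin n, v ℓ * L (Pi.single ℓ 1) := by
  conv_lhs => rw [← Finset.univ_sum_single v, map_sum]
  refine Finset.sum_congr rfl fun ℓ _ => ?_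
  have h : Pi.single ℓ (v ℓ) = v ℓ • (Pi.single ℓ (1:ℝ) : Fin n → ℝ) := by
    rw [← Pi.single_smul, smul_eq_mul, mul_one]
  rw [h, map_smul, smul_eq_mul]

def shN (i t : ℕ) : ℕ := if t < i then t else t+1

lemma sh_coe {q : ℕ} (i : Fin (q+1)) (t : Fin q) :
    ((i.succAbove t : Fin (q+1)) : ℕ) = shN i.1 t.1 := by
  rw [Fin.succAbove, shN]
  split_ifs with h1 h2 h3
  · simp
  · exact absurd (Fin.lt_def.mp h1) h2
  · exact absurd (Fin.lt_def.mpr (by simpa using h3)) h1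
  · simp

lemma diff_comp {n : ℕ} {f : (Fin n → ℝ) → (Fin n → ℝ)} {z : Fin n → ℝ}
    (hf : DifferentiableAt ℝ f z) (p : Fin n) :
    DifferentiableAt ℝ (fun w => f w p) z :=
  DifferentiableAt.comp z
    ((ContinuousLinearMap.proj p (R := ℝ) (φ := fun _ : Fin n => ℝ)).differentiableAt) hf

lemma fderiv_comp_apply {n : ℕ} {f : (Fin n → ℝ) → (Fin n → ℝ)} {z : Fin n → ℝ}
    (hf : DifferentiableAt ℝ f z) (p : Fin n) (v : Fin n → ℝ) :
    fderiv ℝ (fun w => f w p) z v = fderiv ℝ f z v p := by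
  have h := ((ContinuousLinearMap.proj p (R := ℝ) (φ := fun _ : Fin n => ℝ)).hasFDerivAt
    (x := f z)).comp z hf.hasFDerivAt
  have h2 : HasFDerivAt (fun w => f w p)
      ((ContinuousLinearMap.proj p (R := ℝ) (φ := fun _ : Fin n => ℝ)).comp (fderiv ℝ f z)) z := h
  rw [h2.fderiv]
  rfl

lemma fderiv_pi_apply_eq_sum {n : ℕ} {f : (Fin n → ℝ) → (Fin n → ℝ)} {z : Fin n → ℝ}
    (hf : DifferentiableAt ℝ f z) (v : Fin n → ℝ) (p : Fin n) :
    fderiv ℝ f z v p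
      = ∑ ℓ : Fin n, v ℓ * fderiv ℝ (fun w => f w p) z (Pi.single ℓ 1) := by
  rw [← fderiv_comp_apply hf p v, clm_apply_eq_sum]

lemma hasfd_comp {n : ℕ} {f : (Fin n → ℝ) → (Fin n → ℝ)} {z : Fin n → ℝ}
    (hf : DifferentiableAt ℝ f z) (p : Fin n) :
    HasFDerivAt (fun w => f w p)
      ((ContinuousLinearMap.proj p (R := ℝ) (φ := fun _ : Fin n => ℝ)).comp (fderiv ℝ f z)) z :=
  ((ContinuousLinearMap.proj p (R := ℝ) (φ := fun _ : Fin n => ℝ)).hasFDerivAt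
    (x := f z)).comp z hf.hasFDerivAt

lemma tensorApply_fderiv_apply {n k : ℕ} (a : (Fin k → Fin n) → (Fin n → ℝ) → ℝ)
    (Y : Fin k → (Fin n → ℝ) → (Fin n → ℝ)) (z v : Fin n → ℝ)
    (haD : ∀ I, DifferentiableAt ℝ (a I) z) (hY : ∀ m, DifferentiableAt ℝ (Y m) z) :
    fderiv ℝ (tensorApply k a Y) z v
      = ∑ I : Fin k → Fin n,
          (fderiv ℝ (a I) z v * ∏ m : Fin k, Y m z (I m)
           + a I z * ∑ m : Fin k, fderiv ℝ (Y m) z v (I m) *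
               ∏ m' ∈ Finset.univ.erase m, Y m' z (I m')) := by
  have hprod : ∀ I : Fin k → Fin n, HasFDerivAt (fun w => ∏ m : Fin k, Y m w (I m))
      (∑ m : Fin k, (∏ j ∈ Finset.univ.erase m, Y j z (I j)) •
        ((ContinuousLinearMap.proj (I m) (R := ℝ) (φ := fun _ : Fin n => ℝ)).comp
          (fderiv ℝ (Y m) z))) z := fun I =>
    HasFDerivAt.finset_prod (fun m _ => hasfd_comp (hY m) (I m))
  have hsum : HasFDerivAt (tensorApply k a Y)
      (∑ I : Fin k → Fin n,
        ((a I z) • (∑ m : Fin k, (∏ j ∈ Finset.univ.erase m, Y j z (I j)) •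
           ((ContinuousLinearMap.proj (I m) (R := ℝ) (φ := fun _ : Fin n => ℝ)).comp
             (fderiv ℝ (Y m) z)))
         + (∏ m : Fin k, Y m z (I m)) • fderiv ℝ (a I) z)) z := by
    exact HasFDerivAt.fun_sum (fun I _ => ((haD I).hasFDerivAt.mul (hprod I)))
  rw [hsum.fderiv]
  simp only [ContinuousLinearMap.sum_apply, ContinuousLinearMap.add_apply,
    ContinuousLinearMap.smul_apply, ContinuousLinearMap.coe_comp', Function.comp_apply,
    ContinuousLinearMap.proj_apply, smul_eq_mul]
  refine Finset.sum_congr rfl fun I _ => ?_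
  rw [add_comm]
  congr 1
  · exact mul_comm _ _
  · congr 1
    exact Finset.sum_congr rfl fun m _ => mul_comm _ _

lemma fin_sum_to_range {M : Type*} [AddCommMonoid M] {q : ℕ} (g : Fin q → M) (f : ℕ → M)
    (h : ∀ t : Fin q, g t = f t.1) : ∑ t : Fin q, g t = ∑ t ∈ range q, f t := by
  rw [← Fin.sum_univ_eq_sum_range f q]
  exact Finset.sum_congr rfl fun t _ => h t

lemma fin_prod_to_range {M : Type*} [CommMonoid M] {q : ℕ} (g : Fin q → M) (f : ℕ → M)
    (h : ∀ t : Fin q, g t = f t.1) : ∏ t : Fin q, g t = ∏ t ∈ range q, f t := by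
  rw [← Fin.prod_univ_eq_prod_range f q]
  exact Finset.prod_congr rfl fun t _ => h t

lemma finprod_erase_to_range {M : Type*} [CommMonoid M] {q : ℕ} (m : Fin q) (g : Fin q → M)
    (f : ℕ → M) (h : ∀ t : Fin q, g t = f t.1) :
    ∏ t ∈ Finset.univ.erase m, g t = ∏ t ∈ (range q).erase m.1, f t := by
  refine Finset.prod_nbij' (fun t => t.1) (fun t => if h : t < q then ⟨t, h⟩ else m)
    ?_ ?_ ?_ ?_ ?_
  · intro t ht
    have := Finset.ne_of_mem_erase ht
    simp [Finset.mem_erase, t.isLt, Fin.val_ne_iff.mpr this]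
  · intro t ht
    simp only [Finset.mem_erase, Finset.mem_range] at ht
    simp only [dif_pos ht.2, Finset.mem_erase, Finset.mem_univ, and_true]
    exact fun hc => ht.1 (by simpa using congrArg Fin.val hc)
  · intro t _; simp [t.isLt]
  · intro t ht
    simp only [Finset.mem_erase, Finset.mem_range] at ht
    simp [dif_pos ht.2]
  · intro t ht
    rw [h t]

lemma Ico_peel {M : Type*} [AddCommMonoid M] (i k : ℕ) (f : ℕ → M) :
    ∑ m ∈ Ico i k, f m = (if i < k then f i else 0) + ∑ m ∈ Ico (i+1) k, f m := by
  by_cases h : i < k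
  · rw [Finset.sum_eq_sum_Ico_succ_bot h, if_pos h]
  · rw [if_neg h, Finset.Ico_eq_empty (by omega), Finset.Ico_eq_empty (by omega)]
    simp

lemma range_peel0 {M : Type*} [AddCommMonoid M] (q : ℕ) (hq : 0 < q) (f : ℕ → M) :
    ∑ m ∈ range q, f m = f 0 + ∑ m ∈ Ico 1 q, f m := by
  rw [range_eq_Ico, Finset.sum_eq_sum_Ico_succ_bot hq]

lemma keyAlg (k : ℕ) (W : ℕ → ℕ → ℕ → ℝ) (P : ℕ → ℕ → ℝ)
    (hP : ∀ i, P i i = P i (i+1)) :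
    (∑ i ∈ range (k+1), (-1:ℝ)^i * ∑ m ∈ range k, W i (shN i m) m * P m i)
    + ∑ j ∈ range (k+1), ∑ i ∈ range j, (-1:ℝ)^j * ((W i j i - W j i i) * P i j)
    = (∑ i ∈ range (k+1), ∑ m ∈ Ico (i+1) k, (-1:ℝ)^i * (W i (m+1) m * P m i))
    + ∑ i ∈ range (k+1), ∑ j ∈ Ico (i+2) (k+1), (-1:ℝ)^j * (W i j i * P i j) := by
  have hA : (∑ i ∈ range (k+1), (-1:ℝ)^i * ∑ m ∈ range k, W i (shN i m) m * P m i)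
      = (∑ i ∈ range (k+1), ∑ m ∈ range i, (-1:ℝ)^i * (W i m m * P m i))
        + ((∑ i ∈ range (k+1), (if i < k then (-1:ℝ)^i * (W i (i+1) i * P i i) else 0))
        + ∑ i ∈ range (k+1), ∑ m ∈ Ico (i+1) k, (-1:ℝ)^i * (W i (m+1) m * P m i)) := by
    rw [← Finset.sum_add_distrib, ← Finset.sum_add_distrib]
    refine Finset.sum_congr rfl fun i hi => ?_
    have hik : i ≤ k := by simpa using Nat.lt_succ_iff.mp (mem_range.mp hi)
    have hsplit : ∑ m ∈ range k, W i (shN i m) m * P m i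
        = (∑ m ∈ range i, W i m m * P m i)
          + ((if i < k then W i (i+1) i * P i i else 0)
            + ∑ m ∈ Ico (i+1) k, W i (m+1) m * P m i) := by
      rw [range_eq_Ico, ← Finset.sum_Ico_consecutive _ (Nat.zero_le i) hik]
      congr 1
      · rw [← range_eq_Ico]
        refine Finset.sum_congr rfl fun m hm => ?_
        have : shN i m = m := by simp [shN, mem_range.mp hm]
        rw [this]
      · rw [Ico_peel]
        congr 1
        · by_cases h : i < k
          · rw [if_pos h, if_pos h]
            have : shN i i = i + 1 := by simp [shN]
            rw [this]
          · rw [if_neg h, if_neg h]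
        · refine Finset.sum_congr rfl fun m hm => ?_
          have hm' := mem_Ico.mp hm
          have : shN i m = m + 1 := by simp [shN]; omega
          rw [this]
    rw [hsplit, mul_add, mul_add, Finset.mul_sum, Finset.mul_sum]
    congr 1
    by_cases h : i < k
    · rw [if_pos h, if_pos h]
    · rw [if_neg h, if_neg h, mul_zero]
  have hB : (∑ j ∈ range (k+1), ∑ i ∈ range j, (-1:ℝ)^j * ((W i j i - W j i i) * P i j))
      = (∑ j ∈ range (k+1), ∑ i ∈ range j, (-1:ℝ)^j * (W i j i * P i j))
        - ∑ j ∈ range (k+1), ∑ i ∈ range j, (-1:ℝ)^j * (W j i i * P i j) := by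
    rw [← Finset.sum_sub_distrib]
    refine Finset.sum_congr rfl fun j _ => ?_
    rw [← Finset.sum_sub_distrib]
    refine Finset.sum_congr rfl fun i _ => ?_
    ring
  have hB1 : (∑ j ∈ range (k+1), ∑ i ∈ range j, (-1:ℝ)^j * (W i j i * P i j))
      = (∑ i ∈ range (k+1), (if i + 1 < k + 1 then (-1:ℝ)^(i+1) * (W i (i+1) i * P i (i+1)) else 0))
        + ∑ i ∈ range (k+1), ∑ j ∈ Ico (i+2) (k+1), (-1:ℝ)^j * (W i j i * P i j) := by
    have h := Finset.sum_Ico_Ico_comm' 0 (k+1) (fun i j => (-1:ℝ)^j * (W i j i * P i j))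
    rw [show (∑ j ∈ range (k+1), ∑ i ∈ range j, (-1:ℝ)^j * (W i j i * P i j))
        = ∑ j ∈ Ico 0 (k+1), ∑ i ∈ Ico 0 j, (-1:ℝ)^j * (W i j i * P i j) by
      simp only [range_eq_Ico], ← h, ← Finset.sum_add_distrib]
    rw [range_eq_Ico]
    refine Finset.sum_congr rfl fun i _ => ?_
    rw [Ico_peel]
  have hMid : (∑ i ∈ range (k+1), (if i < k then (-1:ℝ)^i * (W i (i+1) i * P i i) else 0))
      + (∑ i ∈ range (k+1), (if i + 1 < k + 1 then (-1:ℝ)^(i+1) * (W i (i+1) i * P i (i+1)) else 0))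
      = 0 := by
    rw [← Finset.sum_add_distrib]
    refine Finset.sum_eq_zero fun i _ => ?_
    by_cases h : i < k
    · rw [if_pos h, if_pos (by omega), hP i]
      ring
    · rw [if_neg h, if_neg (by omega), add_zero]
  rw [hA, hB, hB1]
  linarith [hMid]

lemma prod_Ico_erase_shift {M : Type*} [CommMonoid M] (a b u : ℕ) (f : ℕ → M) :
    ∏ t ∈ (Ico a b).erase (a + u), f t = ∏ s ∈ (range (b - a)).erase u, f (a + s) := by
  refine Finset.prod_nbij' (fun t => t - a) (fun s => a + s) ?_ ?_ ?_ ?_ ?_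
  · intro t ht
    simp only [Finset.mem_erase, Finset.mem_Ico] at ht
    simp only [Finset.mem_erase, Finset.mem_range]
    omega
  · intro s hs
    simp only [Finset.mem_erase, Finset.mem_range] at hs
    simp only [Finset.mem_erase, Finset.mem_Ico]
    omega
  · intro t ht
    simp only [Finset.mem_erase, Finset.mem_Ico] at ht
    omega
  · intro s _; omega
  · intro t ht
    simp only [Finset.mem_erase, Finset.mem_Ico] at ht
    congr 1
    omega

lemma prod_erase_split1 {M : Type*} [CommMonoid M] (q r u : ℕ) (g : ℕ → M)
    (hu : 1 ≤ u) (hu2 : r + u < q) :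
    ∏ t ∈ (range q).erase (r+u), g t
      = (∏ t ∈ range r, g t) * ∏ s ∈ (range (q - r)).erase u, g (r+s) := by
  have hset : (range q).erase (r+u) = (range r) ∪ (Ico r q).erase (r+u) := by
    ext t
    simp only [Finset.mem_erase, Finset.mem_range, Finset.mem_union, Finset.mem_Ico]
    omega
  rw [hset, Finset.prod_union (by
    rw [Finset.disjoint_left]
    intro t ht ht2
    simp only [Finset.mem_range] at ht
    simp only [Finset.mem_erase, Finset.mem_Ico] at ht2
    omega)]
  rw [prod_Ico_erase_shift]

lemma prod_erase_split2 {M : Type*} [CommMonoid M] (q r : ℕ) (g : ℕ → M) (hr : r < q) :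
    ∏ t ∈ (range q).erase r, g t
      = (∏ t ∈ range r, g t) * ∏ s ∈ range (q - (r+1)), g (r+1+s) := by
  have hset : (range q).erase r = (range r) ∪ (Ico (r+1) q) := by
    ext t
    simp only [Finset.mem_erase, Finset.mem_range, Finset.mem_union, Finset.mem_Ico]
    omega
  rw [hset, Finset.prod_union (by
    rw [Finset.disjoint_left]
    intro t ht ht2
    simp only [Finset.mem_range] at ht
    simp only [Finset.mem_Ico] at ht2
    omega)]
  rw [Finset.prod_Ico_eq_prod_range]


lemma bridgeS {n : ℕ} (r j : ℕ) (J : Fin (j+2) → Fin n)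
    (Y : Fin (j+3) → ((Fin n → ℝ) → (Fin n → ℝ))) (z : Fin n → ℝ)
    (xN : ℕ → Fin n → ℝ) (dN : ℕ → Fin n → Fin n → ℝ) (IvN : ℕ → Fin n)
    (hx : ∀ (s : Fin (j+3)) (p : Fin n), Y s z p = xN (r + s.1) p)
    (hd : ∀ (s : Fin (j+3)) (ℓ p : Fin n),
      fderiv ℝ (fun w => Y s w p) z (Pi.single ℓ 1) = dN (r + s.1) ℓ p)
    (hJ : ∀ m : Fin (j+2), J m = IvN (r + m.1)) :
    Sop j J Y z
      = (∑ u ∈ Ico 1 (j+2), ∑ ℓ : Fin n,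
          xN r ℓ * (dN (r+1+u) ℓ (IvN (r+u)) *
            ∏ s ∈ (range (j+2)).erase u, xN (r+1+s) (IvN (r+s))))
      + ∑ pos ∈ Ico 1 (j+2), (-1:ℝ)^(pos+1) * ∑ ℓ : Fin n,
          xN r ℓ * (dN (r+1+pos) ℓ (IvN r) *
            ∏ s ∈ range (j+1), xN (r+1+(shN pos s)) (IvN (r+1+s))) := by
  rw [Sop]
  congr 1
  · -- first part
    rw [fin_sum_to_range _ (fun u => if u = 0 then 0 else ∑ ℓ : Fin n,
        xN r ℓ * (dN (r+1+u) ℓ (IvN (r+u)) *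
          ∏ s ∈ (range (j+2)).erase u, xN (r+1+s) (IvN (r+s))))]
    · rw [range_peel0 _ (by omega)]
      rw [if_pos rfl, zero_add]
      refine Finset.sum_congr rfl fun u hu => ?_
      rw [if_neg (by have := (mem_Ico.mp hu).1; omega)]
    · intro u
      by_cases hu : (u : ℕ) = 0
      · rw [if_pos hu, if_pos hu]
      · rw [if_neg hu, if_neg hu]
        refine Finset.sum_congr rfl fun ℓ _ => ?_
        rw [Fin.prod_univ_succ]
        have h0 : (Fin.cons (dxop ℓ)
            (Function.update (fun q => dxop (J q)) u (ddxop ℓ (J u))) :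
              Fin (j+3) → SlotOp n) 0 (Y 0) z = xN r ℓ := by
          rw [Fin.cons_zero, dxop, hx 0]
          norm_num
        have hfun : ∀ s : Fin (j+2),
            (Fin.cons (dxop ℓ)
              (Function.update (fun q => dxop (J q)) u (ddxop ℓ (J u))) :
                Fin (j+3) → SlotOp n) s.succ (Y s.succ) z
            = Function.update (fun s : Fin (j+2) => xN (r+1+s.1) (IvN (r+s.1))) u
                (dN (r+1+u.1) ℓ (IvN (r+u.1))) s := by
          intro s
          rw [Fin.cons_succ]
          rcases eq_or_ne s u with rfl | hs
          · rw [Function.update_self, Function.update_self, ddxop, hd s.succ, hJ s]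
            congr 1
            · simp [Fin.val_succ]; omega
          · rw [Function.update_of_ne hs, Function.update_of_ne hs, dxop, hx s.succ, hJ s]
            congr 1
            · simp [Fin.val_succ]; omega
        calc (Fin.cons (dxop ℓ)
              (Function.update (fun q => dxop (J q)) u (ddxop ℓ (J u))) :
                Fin (j+3) → SlotOp n) 0 (Y 0) z *
              ∏ s : Fin (j+2), (Fin.cons (dxop ℓ)
                (Function.update (fun q => dxop (J q)) u (ddxop ℓ (J u))) :
                  Fin (j+3) → SlotOp n) s.succ (Y s.succ) z
            = xN r ℓ * ∏ s : Fin (j+2),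
                Function.update (fun s : Fin (j+2) => xN (r+1+s.1) (IvN (r+s.1))) u
                  (dN (r+1+u.1) ℓ (IvN (r+u.1))) s := by
              rw [h0]
              congr 1
              exact Finset.prod_congr rfl fun s _ => hfun s
          _ = xN r ℓ * (dN (r+1+u.1) ℓ (IvN (r+u.1)) *
                ∏ s ∈ (range (j+2)).erase u.1, xN (r+1+s) (IvN (r+s))) := by
              rw [Finset.prod_update_of_mem (Finset.mem_univ u), ← Finset.erase_eq]
              rw [finprod_erase_to_range u _ (fun s => xN (r+1+s) (IvN (r+s))) (fun t => rfl)]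
  · -- second part
    rw [fin_sum_to_range _ (fun pos => if pos = 0 then 0 else (-1:ℝ)^(pos+1) *
        ∑ ℓ : Fin n, xN r ℓ * (dN (r+1+pos) ℓ (IvN r) *
          ∏ s ∈ range (j+1), xN (r+1+(shN pos s)) (IvN (r+1+s))))]
    · rw [range_peel0 _ (by omega)]
      rw [if_pos rfl, zero_add]
      refine Finset.sum_congr rfl fun pos hpos => ?_
      rw [if_neg (by have := (mem_Ico.mp hpos).1; omega)]
    · intro pos
      by_cases hp : (pos : ℕ) = 0
      · rw [if_pos hp, if_pos hp]
      · rw [if_neg hp, if_neg hp]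
        congr 1
        refine Finset.sum_congr rfl fun ℓ _ => ?_
        have hG : ∀ s : Fin (j+2),
            ((Fin.insertNth pos (ddxop ℓ (J 0)) (fun q => dxop (J q.succ))) :
              Fin (j+2) → SlotOp n) s = (fun s : Fin (j+2) =>
              ((Fin.insertNth pos (ddxop ℓ (J 0)) (fun q => dxop (J q.succ))) :
                Fin (j+2) → SlotOp n) s) s := fun _ => rfl
        rw [Fin.prod_univ_succ]
        have h0 : (Fin.cons (dxop ℓ)
            ((Fin.insertNth pos (ddxop ℓ (J 0)) (fun q => dxop (J q.succ))) :
              Fin (j+2) → SlotOp n) : Fin (j+3) → SlotOp n) 0 (Y 0) z = xN r ℓ := by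
          rw [Fin.cons_zero, dxop, hx 0]
          norm_num
        rw [h0]
        congr 1
        have hcons : ∀ s : Fin (j+2), (Fin.cons (dxop ℓ)
            ((Fin.insertNth pos (ddxop ℓ (J 0)) (fun q => dxop (J q.succ))) :
              Fin (j+2) → SlotOp n) : Fin (j+3) → SlotOp n) s.succ (Y s.succ) z
            = (((Fin.insertNth pos (ddxop ℓ (J 0)) (fun q => dxop (J q.succ))) :
                Fin (j+2) → SlotOp n) s) (Y s.succ) z :=
          fun s => by rw [Fin.cons_succ]
        calc (∏ s : Fin (j+2), (Fin.cons (dxop ℓ)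
              ((Fin.insertNth pos (ddxop ℓ (J 0)) (fun q => dxop (J q.succ))) :
                Fin (j+2) → SlotOp n) : Fin (j+3) → SlotOp n) s.succ (Y s.succ) z)
            = ∏ s : Fin (j+2),
                (((Fin.insertNth pos (ddxop ℓ (J 0)) (fun q => dxop (J q.succ))) :
                  Fin (j+2) → SlotOp n) s) (Y s.succ) z :=
              Finset.prod_congr rfl fun s _ => hcons s
          _ = (((Fin.insertNth pos (ddxop ℓ (J 0)) (fun q => dxop (J q.succ))) :
                  Fin (j+2) → SlotOp n) pos) (Y pos.succ) z *
              ∏ t : Fin (j+1),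
                (((Fin.insertNth pos (ddxop ℓ (J 0)) (fun q => dxop (J q.succ))) :
                  Fin (j+2) → SlotOp n) (pos.succAbove t)) (Y (pos.succAbove t).succ) z :=
              Fin.prod_univ_succAbove _ pos
          _ = dN (r+1+pos.1) ℓ (IvN r) *
              ∏ s ∈ range (j+1), xN (r+1+(shN pos.1 s)) (IvN (r+1+s)) := by
              congr 1
              · rw [Fin.insertNth_apply_same, ddxop, hd pos.succ, hJ 0,
                  show r + ((pos.succ : Fin (j+3)) : ℕ) = r+1+pos.1 by
                    rw [Fin.val_succ]; omega,
                  show r + (((0 : Fin (j+2))) : ℕ) = r by simp]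
              · refine fin_prod_to_range _ (fun s => xN (r+1+(shN pos.1 s)) (IvN (r+1+s))) ?_
                intro t
                rw [Fin.insertNth_apply_succAbove, dxop, hx (pos.succAbove t).succ,
                  hJ t.succ]
                congr 1
                · rw [Fin.val_succ, sh_coe]
                  omega
                · rw [Fin.val_succ]
                  congr 1
                  omega


lemma sum_shuffle1 {n : ℕ} (c p Q : ℝ) (x d : Fin n → ℝ) :
    c * (p * ∑ ℓ : Fin n, x ℓ * (d ℓ * Q)) = c * ((∑ ℓ : Fin n, x ℓ * d ℓ) * (p * Q)) := by
  have h : ∑ ℓ : Fin n, x ℓ * (d ℓ * Q) = (∑ ℓ : Fin n, x ℓ * d ℓ) * Q := by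
    rw [Finset.sum_mul]
    exact Finset.sum_congr rfl fun ℓ _ => by ring
  rw [h]; ring

lemma sum_shuffle2 {n : ℕ} (c ce e p Q : ℝ) (x d : Fin n → ℝ) (hce : ce = c * e) :
    c * (p * (e * ∑ ℓ : Fin n, x ℓ * (d ℓ * Q)))
      = ce * ((∑ ℓ : Fin n, x ℓ * d ℓ) * (p * Q)) := by
  subst hce
  have h : ∑ ℓ : Fin n, x ℓ * (d ℓ * Q) = (∑ ℓ : Fin n, x ℓ * d ℓ) * Q := by
    rw [Finset.sum_mul]
    exact Finset.sum_congr rfl fun ℓ _ => by ring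
  rw [h]; ring

noncomputable def xNf {n : ℕ} (q : ℕ) (X : Fin q → (Fin n → ℝ) → (Fin n → ℝ))
    (z : Fin n → ℝ) : ℕ → Fin n → ℝ :=
  fun i p => if h : i < q then X ⟨i, h⟩ z p else 0

noncomputable def dNf {n : ℕ} (q : ℕ) (X : Fin q → (Fin n → ℝ) → (Fin n → ℝ))
    (z : Fin n → ℝ) : ℕ → Fin n → Fin n → ℝ :=
  fun i ℓ p => if h : i < q then fderiv ℝ (fun w => X ⟨i, h⟩ w p) z (Pi.single ℓ 1) else 0

noncomputable def IvNf {n K : ℕ} (I : Fin (K+2) → Fin n) : ℕ → Fin n :=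
  fun t => if h : t < K+2 then I ⟨t, h⟩ else I ⟨0, by omega⟩

noncomputable def PNf {n K : ℕ} (X : Fin (K+3) → (Fin n → ℝ) → (Fin n → ℝ))
    (z : Fin n → ℝ) (I : Fin (K+2) → Fin n) : ℕ → ℕ → ℝ :=
  fun m i => ∏ t ∈ (range (K+2)).erase m, xNf (K+3) X z (shN i t) (IvNf I t)

noncomputable def WNf {n K : ℕ} (X : Fin (K+3) → (Fin n → ℝ) → (Fin n → ℝ))
    (z : Fin n → ℝ) (I : Fin (K+2) → Fin n) : ℕ → ℕ → ℕ → ℝ :=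
  fun i jj m => ∑ ℓ : Fin n, xNf (K+3) X z i ℓ * dNf (K+3) X z jj ℓ (IvNf I m)


/-- the local coboundary formula.  For a smooth `k`-tensor
`ω = Σ_I a_I dx^{i₁}⊗⋯⊗dx^{i_k}` on `U` with `k ≥ 2` (here `k = K+2`),
`dω = L(ω) + Σ_I a_I Σ_{r=0}^{k−2} (−1)^r (dx^{i₁}⊗⋯⊗dx^{i_r}) ⊗ S(dx^{i_{r+1}}⊗⋯⊗dx^{i_k})`,
as an identity of `(k+1)`-fold multilinear operators evaluated on arbitrary smooth
vector fields `X₁,…,X_{k+1}` on `U`. -/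
theorem leibnizD_k_tensor_local_formula (n K : ℕ) (hn : 1 ≤ n)
    (U : Set (Fin n → ℝ)) (hU : IsOpen U) (hUne : U.Nonempty)
    (a : (Fin (K+2) → Fin n) → (Fin n → ℝ) → ℝ)
    (ha : ∀ I, ContDiffOn ℝ (⊤ : ℕ∞) (a I) U)
    (X : Fin (K+3) → (Fin n → ℝ) → (Fin n → ℝ))
    (hX : ∀ i, ContDiffOn ℝ (⊤ : ℕ∞) (X i) U) :
    ∀ z ∈ U,
      leibnizD (K+2) a X z =
        Lop (K+2) a X z +
        ∑ I : Fin (K+2) → Fin n, a I z *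
          ∑ r : Fin (K+1), (-1 : ℝ)^(r : ℕ) *
            ((∏ s : Fin (r : ℕ), X ⟨s.1, by omega⟩ z (I ⟨s.1, by omega⟩)) *
              Sop (K - r) (fun m => I ⟨r.1 + m.1, by omega⟩)
                (fun s => X ⟨r.1 + s.1, by omega⟩) z) := by
  intro z hz
  have hnh : U ∈ nhds z := hU.mem_nhds hz
  have hXd : ∀ i, DifferentiableAt ℝ (X i) z :=
    fun i => ((hX i).contDiffAt hnh).differentiableAt (by simp)
  have haD : ∀ I, DifferentiableAt ℝ (a I) z :=
    fun I => ((ha I).contDiffAt hnh).differentiableAt (by simp)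
  have hxv : ∀ (i : Fin (K+3)) (p : Fin n), xNf (K+3) X z i.1 p = X i z p := by
    intro i p; simp [xNf]
  have hdv : ∀ (i : Fin (K+3)) (ℓ p : Fin n),
      dNf (K+3) X z i.1 ℓ p = fderiv ℝ (fun w => X i w p) z (Pi.single ℓ 1) := by
    intro i ℓ p; simp [dNf]
  have hIv : ∀ (I : Fin (K+2) → Fin n) (t : Fin (K+2)), IvNf I t.1 = I t := by
    intro I t; simp [IvNf]
  have hP : ∀ (I : Fin (K+2) → Fin n) (i : ℕ), PNf X z I i i = PNf X z I i (i+1) := by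
    intro I i
    refine Finset.prod_congr rfl fun t ht => ?_
    have hti : t ≠ i := Finset.ne_of_mem_erase ht
    have : shN i t = shN (i+1) t := by simp only [shN]; split_ifs <;> omega
    rw [this]
  -- conversion of the "derivative-of-fields" part of A to ℕ-world
  have hADconv : ∀ I : Fin (K+2) → Fin n,
      (∑ i : Fin (K+3), (-1:ℝ)^(i:ℕ) * ∑ m : Fin (K+2),
        fderiv ℝ (X (i.succAbove m)) z (X i z) (I m) *
          ∏ m' ∈ Finset.univ.erase m, X (i.succAbove m') z (I m'))
      = ∑ i ∈ range (K+3), (-1:ℝ)^i * ∑ m ∈ range (K+2),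
          WNf X z I i (shN i m) m * PNf X z I m i := by
    intro I
    refine fin_sum_to_range _ _ ?_
    intro i
    congr 1
    refine fin_sum_to_range _ (fun m => WNf X z I i.1 (shN i.1 m) m * PNf X z I m i.1) ?_
    intro m
    have hprd : (∏ m' ∈ Finset.univ.erase m, X (i.succAbove m') z (I m'))
        = PNf X z I m.1 i.1 := by
      refine finprod_erase_to_range m _ _ ?_
      intro t
      rw [← sh_coe i t, hxv (i.succAbove t), hIv]
    have hder : fderiv ℝ (X (i.succAbove m)) z (X i z) (I m)
        = WNf X z I i.1 (shN i.1 m.1) m.1 := by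
      rw [fderiv_pi_apply_eq_sum (hXd _) (X i z) (I m), WNf]
      refine Finset.sum_congr rfl fun ℓ _ => ?_
      rw [hxv i ℓ, ← sh_coe i m, hdv (i.succAbove m), hIv]
    rw [hprd, hder]
  -- the a-derivative part of A equals Lop
  have hALL : (∑ I : Fin (K+2) → Fin n, ∑ i : Fin (K+3), (-1:ℝ)^(i:ℕ) *
        (fderiv ℝ (a I) z (X i z) * ∏ m : Fin (K+2), X (i.succAbove m) z (I m)))
      = Lop (K+2) a X z := by
    have hIns : ∀ (I : Fin (K+2) → Fin n) (ℓ : Fin n) (mm : Fin (K+3)),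
        (∏ s : Fin (K+3), X s z ((Fin.insertNth mm ℓ I : Fin (K+3) → Fin n) s))
        = X mm z ℓ * ∏ t : Fin (K+2), X (mm.succAbove t) z (I t) := by
      intro I ℓ mm
      rw [Fin.prod_univ_succAbove (fun s => X s z ((Fin.insertNth mm ℓ I : Fin (K+3) → Fin n) s)) mm]
      congr 1
      · rw [Fin.insertNth_apply_same]
      · refine Finset.prod_congr rfl fun t _ => ?_
        rw [Fin.insertNth_apply_succAbove]
    rw [Lop]
    refine Finset.sum_congr rfl fun I _ => ?_
    calc (∑ i : Fin (K+3), (-1:ℝ)^(i:ℕ) *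
          (fderiv ℝ (a I) z (X i z) * ∏ m : Fin (K+2), X (i.succAbove m) z (I m)))
        = ∑ i : Fin (K+3), ∑ ℓ : Fin n, (-1:ℝ)^(i:ℕ) *
            ((X i z ℓ * fderiv ℝ (a I) z (Pi.single ℓ 1)) *
              ∏ m : Fin (K+2), X (i.succAbove m) z (I m)) := by
          refine Finset.sum_congr rfl fun i _ => ?_
          rw [clm_apply_eq_sum (fderiv ℝ (a I) z) (X i z), Finset.sum_mul, Finset.mul_sum]
      _ = ∑ ℓ : Fin n, ∑ i : Fin (K+3), (-1:ℝ)^(i:ℕ) *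
            ((X i z ℓ * fderiv ℝ (a I) z (Pi.single ℓ 1)) *
              ∏ m : Fin (K+2), X (i.succAbove m) z (I m)) := Finset.sum_comm
      _ = _ := by
          refine Finset.sum_congr rfl fun ℓ _ => ?_
          rw [Finset.mul_sum]
          refine Finset.sum_congr rfl fun i _ => ?_
          rw [hIns I ℓ i]
          ring
  -- expansion of the A part
  have hAexp : (∑ i : Fin (K+3), (-1:ℝ)^(i:ℕ) *
        fderiv ℝ (tensorApply (K+2) a (fun m => X (i.succAbove m))) z (X i z))
      = (∑ I : Fin (K+2) → Fin n, ∑ i : Fin (K+3), (-1:ℝ)^(i:ℕ) *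
          (fderiv ℝ (a I) z (X i z) * ∏ m : Fin (K+2), X (i.succAbove m) z (I m)))
        + ∑ I : Fin (K+2) → Fin n, a I z *
            ∑ i ∈ range (K+3), (-1:ℝ)^i * ∑ m ∈ range (K+2),
              WNf X z I i (shN i m) m * PNf X z I m i := by
    calc (∑ i : Fin (K+3), (-1:ℝ)^(i:ℕ) *
          fderiv ℝ (tensorApply (K+2) a (fun m => X (i.succAbove m))) z (X i z))
        = ∑ i : Fin (K+3), ∑ I : Fin (K+2) → Fin n, ((-1:ℝ)^(i:ℕ) *
              (fderiv ℝ (a I) z (X i z) * ∏ m : Fin (K+2), X (i.succAbove m) z (I m))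
            + (-1:ℝ)^(i:ℕ) * (a I z * ∑ m : Fin (K+2),
                fderiv ℝ (X (i.succAbove m)) z (X i z) (I m) *
                  ∏ m' ∈ Finset.univ.erase m, X (i.succAbove m') z (I m'))) := by
          refine Finset.sum_congr rfl fun i _ => ?_
          rw [tensorApply_fderiv_apply a (fun m => X (i.succAbove m)) z (X i z) haD
            (fun m => hXd _), Finset.mul_sum]
          refine Finset.sum_congr rfl fun I _ => ?_
          ring
      _ = ∑ I : Fin (K+2) → Fin n, ∑ i : Fin (K+3), ((-1:ℝ)^(i:ℕ) *
              (fderiv ℝ (a I) z (X i z) * ∏ m : Fin (K+2), X (i.succAbove m) z (I m))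
            + (-1:ℝ)^(i:ℕ) * (a I z * ∑ m : Fin (K+2),
                fderiv ℝ (X (i.succAbove m)) z (X i z) (I m) *
                  ∏ m' ∈ Finset.univ.erase m, X (i.succAbove m') z (I m'))) :=
          Finset.sum_comm
      _ = _ := by
          rw [← Finset.sum_add_distrib]
          refine Finset.sum_congr rfl fun I _ => ?_
          rw [Finset.sum_add_distrib]
          congr 1
          rw [← hADconv I, Finset.mul_sum]
          refine Finset.sum_congr rfl fun i _ => ?_
          ring
  -- conversion of the B part
  have hBconv : (∑ i : Fin (K+3), ∑ j : Fin (K+3),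
        if h : i < j then
          (-1 : ℝ)^(j : ℕ) *
            tensorApply (K+2) a
              (Function.update (fun m => X (j.succAbove m))
                ⟨i.1, Nat.lt_of_lt_of_le (Fin.lt_def.mp h) (Nat.lt_succ_iff.mp j.isLt)⟩
                (vfBracket (X i) (X j))) z
        else 0)
      = ∑ I : Fin (K+2) → Fin n, a I z *
          ∑ j ∈ range (K+3), ∑ i ∈ range j, (-1:ℝ)^j *
            ((WNf X z I i j i - WNf X z I j i i) * PNf X z I i j) := by
    have hpair : ∀ i j : Fin (K+3),
        (if h : i < j then
          (-1 : ℝ)^(j : ℕ) *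
            tensorApply (K+2) a
              (Function.update (fun m => X (j.succAbove m))
                ⟨i.1, Nat.lt_of_lt_of_le (Fin.lt_def.mp h) (Nat.lt_succ_iff.mp j.isLt)⟩
                (vfBracket (X i) (X j))) z
        else 0)
        = (if (i:ℕ) < (j:ℕ) then (-1:ℝ)^(j:ℕ) * ∑ I : Fin (K+2) → Fin n, a I z *
            ((WNf X z I i.1 j.1 i.1 - WNf X z I j.1 i.1 i.1) * PNf X z I i.1 j.1)
          else 0) := by
      intro i j
      by_cases hij : i < j
      · rw [dif_pos hij, if_pos (Fin.lt_def.mp hij)]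
        congr 1
        have hiK : i.1 < K+2 :=
          Nat.lt_of_lt_of_le (Fin.lt_def.mp hij) (Nat.lt_succ_iff.mp j.isLt)
        rw [tensorApply]
        refine Finset.sum_congr rfl fun I _ => ?_
        congr 1
        have hbr : vfBracket (X i) (X j) z (I ⟨i.1, hiK⟩)
            = WNf X z I i.1 j.1 i.1 - WNf X z I j.1 i.1 i.1 := by
          rw [vfBracket, Pi.sub_apply]
          congr 1
          · rw [fderiv_pi_apply_eq_sum (hXd j) (X i z) (I ⟨i.1, hiK⟩), WNf]
            refine Finset.sum_congr rfl fun ℓ _ => ?_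
            rw [hxv i ℓ, hdv j, ← hIv I ⟨i.1, hiK⟩]
          · rw [fderiv_pi_apply_eq_sum (hXd i) (X j z) (I ⟨i.1, hiK⟩), WNf]
            refine Finset.sum_congr rfl fun ℓ _ => ?_
            rw [hxv j ℓ, hdv i, ← hIv I ⟨i.1, hiK⟩]
        have hupd : ∀ m : Fin (K+2),
            (Function.update (fun m => X (j.succAbove m)) ⟨i.1, hiK⟩
              (vfBracket (X i) (X j))) m z (I m)
            = Function.update (fun m : Fin (K+2) => X (j.succAbove m) z (I m)) ⟨i.1, hiK⟩
                (vfBracket (X i) (X j) z (I ⟨i.1, hiK⟩)) m := by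
          intro m
          rcases eq_or_ne m ⟨i.1, hiK⟩ with rfl | hm
          · rw [Function.update_self, Function.update_self]
          · rw [Function.update_of_ne hm, Function.update_of_ne hm]
        calc ∏ m : Fin (K+2), (Function.update (fun m => X (j.succAbove m)) ⟨i.1, hiK⟩
              (vfBracket (X i) (X j))) m z (I m)
            = ∏ m : Fin (K+2), Function.update
                (fun m : Fin (K+2) => X (j.succAbove m) z (I m)) ⟨i.1, hiK⟩
                (vfBracket (X i) (X j) z (I ⟨i.1, hiK⟩)) m :=
              Finset.prod_congr rfl fun m _ => hupd m
          _ = vfBracket (X i) (X j) z (I ⟨i.1, hiK⟩) *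
              ∏ m ∈ Finset.univ.erase ⟨i.1, hiK⟩, X (j.succAbove m) z (I m) := by
              rw [Finset.prod_update_of_mem (Finset.mem_univ _), ← Finset.erase_eq]
          _ = (WNf X z I i.1 j.1 i.1 - WNf X z I j.1 i.1 i.1) * PNf X z I i.1 j.1 := by
              rw [hbr]
              congr 1
              refine finprod_erase_to_range ⟨i.1, hiK⟩ _ _ ?_
              intro t
              rw [← sh_coe j t, hxv (j.succAbove t), hIv]
      · rw [dif_neg hij, if_neg (fun hc => hij (Fin.lt_def.mpr hc))]
    refine Eq.trans (fin_sum_to_range _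
      (fun iN => ∑ jN ∈ range (K+3), if iN < jN then (-1:ℝ)^jN *
        ∑ I : Fin (K+2) → Fin n, a I z *
          ((WNf X z I iN jN iN - WNf X z I jN iN iN) * PNf X z I iN jN) else 0)
      (fun i => fin_sum_to_range _ _ (fun j => hpair i j))) ?_
    rw [Finset.sum_comm]
    calc (∑ jN ∈ range (K+3), ∑ iN ∈ range (K+3), if iN < jN then (-1:ℝ)^jN *
            ∑ I : Fin (K+2) → Fin n, a I z *
              ((WNf X z I iN jN iN - WNf X z I jN iN iN) * PNf X z I iN jN) else 0)
        = ∑ jN ∈ range (K+3), ∑ iN ∈ range jN, (-1:ℝ)^jN *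
            ∑ I : Fin (K+2) → Fin n, a I z *
              ((WNf X z I iN jN iN - WNf X z I jN iN iN) * PNf X z I iN jN) := by
          refine Finset.sum_congr rfl fun jN hjN => ?_
          rw [← Finset.sum_filter]
          refine Finset.sum_congr ?_ (fun _ _ => rfl)
          have hj3 : jN < K+3 := mem_range.mp hjN
          ext t
          simp only [Finset.mem_filter, Finset.mem_range]
          omega
      _ = ∑ jN ∈ range (K+3), ∑ iN ∈ range jN, ∑ I : Fin (K+2) → Fin n,
            a I z * ((-1:ℝ)^jN *
              ((WNf X z I iN jN iN - WNf X z I jN iN iN) * PNf X z I iN jN)) := by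
          refine Finset.sum_congr rfl fun jN _ => Finset.sum_congr rfl fun iN _ => ?_
          rw [Finset.mul_sum]
          exact Finset.sum_congr rfl fun I _ => by ring
      _ = ∑ I : Fin (K+2) → Fin n, ∑ jN ∈ range (K+3), ∑ iN ∈ range jN,
            a I z * ((-1:ℝ)^jN *
              ((WNf X z I iN jN iN - WNf X z I jN iN iN) * PNf X z I iN jN)) := by
          rw [Finset.sum_comm]
          exact Finset.sum_congr rfl fun jN _ => Finset.sum_comm
      _ = _ := by
          refine Finset.sum_congr rfl fun I _ => ?_
          simp only [Finset.mul_sum]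
  -- assembly
  simp only [leibnizD]
  rw [hAexp, hBconv, hALL, add_assoc]
  congr 1
  rw [← Finset.sum_add_distrib]
  refine Finset.sum_congr rfl fun I _ => ?_
  rw [← mul_add, keyAlg (K+2) (WNf X z I) (PNf X z I) (hP I)]
  congr 1
  symm
  refine Eq.trans (fin_sum_to_range _
    (fun rN => (∑ m ∈ Ico (rN+1) (K+2), (-1:ℝ)^rN * (WNf X z I rN (m+1) m * PNf X z I m rN))
      + ∑ jj ∈ Ico (rN+2) (K+3), (-1:ℝ)^jj * (WNf X z I rN jj rN * PNf X z I rN jj)) ?_) ?_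
  · intro r
    have hrK : (r:ℕ) ≤ K := Nat.lt_succ_iff.mp r.isLt
    have hb := bridgeS r.1 (K - r.1)
      (fun m => I ⟨r.1+m.1, by omega⟩) (fun s => X ⟨r.1+s.1, by omega⟩) z
      (xNf (K+3) X z) (dNf (K+3) X z) (IvNf I)
      (by
        intro s p
        simp only [xNf]
        rw [dif_pos (by omega : r.1+s.1 < K+3)])
      (by
        intro s ℓ p
        simp only [dNf]
        rw [dif_pos (by omega : r.1+s.1 < K+3)])
      (by
        intro m
        simp only [IvNf]
        rw [dif_pos (by omega : r.1+m.1 < K+2)])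
    rw [hb]
    have hpref : (∏ s : Fin (r:ℕ), X ⟨s.1, by omega⟩ z (I ⟨s.1, by omega⟩))
        = ∏ t ∈ range r.1, xNf (K+3) X z t (IvNf I t) := by
      refine fin_prod_to_range _ _ ?_
      intro s
      simp only [xNf, IvNf]
      rw [dif_pos (by omega : s.1 < K+3), dif_pos (by omega : s.1 < K+2)]
    rw [hpref, mul_add, mul_add]
    congr 1
    · -- first S piece
      rw [Finset.sum_Ico_eq_sum_range, Finset.sum_Ico_eq_sum_range,
        show K - r.1 + 2 - 1 = K+2-(r.1+1) from by omega,
        Finset.mul_sum, Finset.mul_sum]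
      refine Finset.sum_congr rfl fun t ht => ?_
      have htb : t < K+2-(r.1+1) := mem_range.mp ht
      have hPsplit : PNf X z I (r.1+1+t) r.1
          = (∏ tt ∈ range r.1, xNf (K+3) X z tt (IvNf I tt)) *
            ∏ s ∈ (range (K - r.1 + 2)).erase (1+t),
              xNf (K+3) X z (r.1+1+s) (IvNf I (r.1+s)) := by
        simp only [PNf]
        rw [show r.1+1+t = r.1+(1+t) from by omega,
          prod_erase_split1 (K+2) r.1 (1+t) _ (by omega) (by omega)]
        congr 1
        · refine Finset.prod_congr rfl fun tt htt => ?_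
          rw [show shN r.1 tt = tt from by
            simp only [shN]; rw [if_pos (mem_range.mp htt)]]
        · rw [show K+2-r.1 = K - r.1 + 2 from by omega]
          refine Finset.prod_congr rfl fun s hs => ?_
          rw [show shN r.1 (r.1+s) = r.1+1+s from by
            simp only [shN]; split_ifs <;> omega]
      rw [hPsplit,
        show r.1+1+t+1 = r.1+1+(1+t) from by omega,
        show r.1+1+t = r.1+(1+t) from by omega]
      simp only [WNf]
      exact sum_shuffle1 _ _ _ _ _
    · -- second S piece
      rw [Finset.sum_Ico_eq_sum_range, Finset.sum_Ico_eq_sum_range,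
        show K - r.1 + 2 - 1 = K+3-(r.1+2) from by omega,
        Finset.mul_sum, Finset.mul_sum]
      refine Finset.sum_congr rfl fun t ht => ?_
      have htb : t < K+3-(r.1+2) := mem_range.mp ht
      have hPsplit : PNf X z I r.1 (r.1+2+t)
          = (∏ tt ∈ range r.1, xNf (K+3) X z tt (IvNf I tt)) *
            ∏ s ∈ range (K - r.1 + 1),
              xNf (K+3) X z (r.1+1+(shN (1+t) s)) (IvNf I (r.1+1+s)) := by
        simp only [PNf]
        rw [prod_erase_split2 (K+2) r.1 _ (by omega)]
        congr 1
        · refine Finset.prod_congr rfl fun tt htt => ?_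
          rw [show shN (r.1+2+t) tt = tt from by
            simp only [shN]; rw [if_pos (by have := mem_range.mp htt; omega)]]
        · rw [show K+2-(r.1+1) = K - r.1 + 1 from by omega]
          refine Finset.prod_congr rfl fun s hs => ?_
          rw [show shN (r.1+2+t) (r.1+1+s) = r.1+1+(shN (1+t) s) from by
            simp only [shN]; split_ifs <;> omega]
      rw [hPsplit,
        show r.1+2+t = r.1+((1+t)+1) from by omega,
        show r.1+1+(1+t) = r.1+((1+t)+1) from by omega]
      simp only [WNf]
      exact sum_shuffle2 _ _ _ _ _ _ _ (pow_add (-1:ℝ) r.1 ((1+t)+1))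
  · rw [Finset.sum_add_distrib]
    have hext : ∀ (f : ℕ → ℝ), f (K+1) = 0 → f (K+2) = 0 →
        ∑ i ∈ range (K+1), f i = ∑ i ∈ range (K+3), f i := by
      intro f h1 h2
      conv_rhs => rw [Finset.sum_range_succ, Finset.sum_range_succ]
      rw [h1, h2, add_zero, add_zero]
    congr 1
    · refine hext _ ?_ ?_ <;>
        rw [Finset.Ico_eq_empty (by omega), Finset.sum_empty]
    · refine hext _ ?_ ?_ <;>
        rw [Finset.Ico_eq_empty (by omega), Finset.sum_empty]
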